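/- Let ⟨x y x' z⟩ be an ugly quartet in a BMG (𝔾,σ): the path x–y–x'–z is induced in the symmetric part, with σ(x)=σ(x'), and σ(x), σ(y), σ(z) pairwise distinct. Then for every tree (T,σ) explaining (𝔾,σ), lca_T(x',y) = lca_T(x,y), and this vertex has two distinct children whose subtree color sets intersect; hence both edges xy and x'y are unambiguously false-positive. -/

import Mathlib

/-- A finite rooted tree, given by a parent function: every vertex reaches the
root along the parent chain. -/
structure PTree (V : Type*) where
  parent : V → Option V
  root : V
  root_parent : parent root = none
  connected : ∀ v : V, Relation.ReflTransGen (fun a b => parent a = some b) v root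

namespace PTree

variable {V C : Type*}

/-- `T.anc a b` : `b` is an ancestor of `a` (i.e. `a ⪯ b` in the ancestor order). -/
def anc (T : PTree V) (a b : V) : Prop :=
  Relation.ReflTransGen (fun x y => T.parent x = some y) a b

/-- `v` is a child of `u`. -/
def child (T : PTree V) (v u : V) : Prop := T.parent v = some u

/-- A leaf is a vertex without children. -/
def isLeaf (T : PTree V) (v : V) : Prop := ∀ w, ¬ T.child w v

/-- `u` is the last common ancestor of `x` and `y`. -/
def isLCA (T : PTree V) (u x y : V) : Prop :=
  T.anc x u ∧ T.anc y u ∧ ∀ w, T.anc x w → T.anc y w → T.anc u w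

/-- `σ(L(T(v)))` : the set of colors of the leaves of the subtree rooted at `v`. -/
def leafColors (T : PTree V) (σ : V → C) (v : V) : Set C :=
  {c | ∃ x, T.isLeaf x ∧ T.anc x v ∧ σ x = c}

/-- `y` is a best match of `x` in `(T,σ)`. -/
def bestMatch (T : PTree V) (σ : V → C) (x y : V) : Prop :=
  T.isLeaf x ∧ T.isLeaf y ∧ σ x ≠ σ y ∧
    ∀ y', T.isLeaf y' → σ y' = σ y →
      ∀ u u', T.isLCA u x y → T.isLCA u' x y' → T.anc u u'

/-- `x` and `y` are reciprocal best matches, i.e. `xy` is an edge of the BMG `G(T,σ)`. -/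
def edge (T : PTree V) (σ : V → C) (x y : V) : Prop :=
  T.bestMatch σ x y ∧ T.bestMatch σ y x

/-- Every inner vertex (other than the planted root) has exactly two children. -/
def Binary (T : PTree V) : Prop :=
  ∀ u : V, u ≠ T.root → ¬ T.isLeaf u →
    ∃ v₁ v₂, v₁ ≠ v₂ ∧ T.child v₁ u ∧ T.child v₂ u ∧
      ∀ w, T.child w u → w = v₁ ∨ w = v₂

/-- Adjacency in the color-set intersection graph `𝔠_T(u)`. -/
def csiAdj (T : PTree V) (σ : V → C) (u a b : V) : Prop :=
  a ≠ b ∧ T.child a u ∧ T.child b u ∧ (T.leafColors σ a ∩ T.leafColors σ b).Nonempty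

/-- `a` and `b` lie in the same connected component of `𝔠_T(u)`. -/
def sameComp (T : PTree V) (σ : V → C) (u a b : V) : Prop :=
  Relation.ReflTransGen (T.csiAdj σ u) a b

/-- `S` is a connected component of `𝔠_T(u)` with more than one element. -/
def IsBigComp (T : PTree V) (σ : V → C) (u : V) (S : Set V) : Prop :=
  (∃ a, T.child a u ∧ S = {b | T.sameComp σ u a b}) ∧ ∃ a ∈ S, ∃ b ∈ S, a ≠ b

end PTree

/-- `(T, σT)` explains the colored digraph `(E, σ)` on the gene set `L`, with
`ι` identifying the genes with the leaves of `T`. -/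
def Explains {V L C : Type*} (T : PTree V) (ι : L → V) (σT : V → C) (σ : L → C)
    (E : L → L → Prop) : Prop :=
  Function.Injective ι ∧ (∀ l, T.isLeaf (ι l)) ∧ (∀ v, T.isLeaf v → ∃ l, ι l = v) ∧
    (∀ l, σT (ι l) = σ l) ∧ ∀ x y, E x y ↔ T.bestMatch σT (ι x) (ι y)

/-- The parent function after contracting the edge `uv` (with `v` a child of `u`). -/
def contractedParent {V : Type*} [DecidableEq V] (T : PTree V) (u v w : V) : Option V :=
  (T.parent w).map (fun p => if p = v then u else p)

/-- One step towards the contracted parent when contracting all edges whose lower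
endpoints form the set `A`. -/
def multiContractStep {V : Type*} (T : PTree V) (A : Set V) (a b : V) : Prop :=
  T.parent a = some b ∧ b ∈ A

/-- Event types for inner vertices of an event-labeled gene tree. -/
inductive Event : Type
  | speciation
  | duplication


section Helpers

variable {V C : Type*}

namespace PTree

private lemma pr_unique {T : PTree V} : Relator.RightUnique (fun a b => T.parent a = some b) :=
  fun _ _ _ h1 h2 => Option.some.inj ((Eq.symm h1).trans h2)

lemma anc_total {T : PTree V} {a b c : V} (hb : T.anc a b) (hc : T.anc a c) :
    T.anc b c ∨ T.anc c b :=
  Relation.ReflTransGen.total_of_right_unique pr_unique hb hc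

private lemma anc_of_cycle {T : PTree V} {a c : V} (h : T.anc a c)
    (hc : Relation.TransGen (fun x y => T.parent x = some y) a a) : T.anc c a := by
  induction h using Relation.ReflTransGen.head_induction_on with
  | refl => exact .refl
  | @head a b hab hbc ih =>
    obtain ⟨b', hab', hb'a⟩ := Relation.TransGen.head'_iff.mp hc
    have hbb : b' = b := pr_unique hab' hab
    subst hbb
    exact (ih (Relation.TransGen.trans_right hb'a (.single hab))).trans hb'a

lemma no_cycle {T : PTree V} (a : V) :
    ¬ Relation.TransGen (fun x y => T.parent x = some y) a a := by
  intro h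
  have h1 : T.anc T.root a := anc_of_cycle (T.connected a) h
  have h2 : Relation.TransGen (fun x y => T.parent x = some y) T.root T.root :=
    Relation.TransGen.trans_left (Relation.TransGen.trans_right h1 h) (T.connected a)
  obtain ⟨b, hb, -⟩ := Relation.TransGen.head'_iff.mp h2
  rw [T.root_parent] at hb
  cases hb

lemma anc_antisymm {T : PTree V} {a b : V} (h1 : T.anc a b) (h2 : T.anc b a) : a = b := by
  rcases Relation.ReflTransGen.cases_head h1 with rfl | ⟨c, hac, hcb⟩
  · rfl
  · exact absurd (Relation.TransGen.trans_right h2 (Relation.TransGen.head' (r := fun x y => T.parent x = some y) hac hcb))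
      (no_cycle b)

lemma leaf_anc {T : PTree V} {a x : V} (hx : T.isLeaf x) (h : T.anc a x) : a = x := by
  rcases Relation.ReflTransGen.cases_head h with rfl | ⟨c, hac, hcx⟩
  · rfl
  · obtain ⟨b, -, hb⟩ := Relation.TransGen.tail'_iff.mp (Relation.TransGen.head' (r := fun x y => T.parent x = some y) hac hcx)
    exact absurd hb (hx b)

lemma exists_child_between {T : PTree V} {a u : V} (h : T.anc a u) (hne : a ≠ u) :
    ∃ v, T.anc a v ∧ T.child v u := by
  rcases Relation.ReflTransGen.cases_head h with rfl | ⟨c, hac, hcu⟩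
  · exact absurd rfl hne
  · obtain ⟨b, h1, h2⟩ := Relation.TransGen.tail'_iff.mp (Relation.TransGen.head' (r := fun x y => T.parent x = some y) hac hcu)
    exact ⟨b, h1, h2⟩

lemma anc_between {T : PTree V} {v w u : V} (hvw : T.anc v w) (hwu : T.anc w u)
    (hvu : T.child v u) : w = v ∨ w = u := by
  rcases Relation.ReflTransGen.cases_head hvw with rfl | ⟨c, hvc, hcw⟩
  · exact Or.inl rfl
  · have hcu : c = u := pr_unique hvc hvu
    subst hcu
    exact Or.inr (anc_antisymm hwu hcw)

lemma child_not_anc {T : PTree V} {v₁ v₂ u : V} (h1 : T.child v₁ u) (h2 : T.child v₂ u)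
    (hne : v₁ ≠ v₂) : ¬ T.anc v₁ v₂ := by
  intro h
  rcases Relation.ReflTransGen.cases_head h with rfl | ⟨c, hc, hcv⟩
  · exact hne rfl
  · have hcu : c = u := pr_unique hc h1
    rw [hcu] at hcv
    have huv : u = v₂ := anc_antisymm hcv (.single h2)
    exact no_cycle v₂ (.single (huv ▸ h2))

lemma isLCA.symm {T : PTree V} {u a b : V} (h : T.isLCA u a b) : T.isLCA u b a :=
  ⟨h.2.1, h.1, fun w h1 h2 => h.2.2 w h2 h1⟩

lemma lca_unique {T : PTree V} {u u' a b : V} (h : T.isLCA u a b) (h' : T.isLCA u' a b) :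
    u = u' :=
  anc_antisymm (h.2.2 u' h'.1 h'.2.1) (h'.2.2 u h.1 h.2.1)

private lemma exists_min_of_total {α : Type*} [DecidableEq α] (r : α → α → Prop)
    (htr : ∀ {a b c}, r a b → r b c → r a c) (s : Finset α) :
    s.Nonempty → (∀ a ∈ s, ∀ b ∈ s, r a b ∨ r b a) → ∃ m ∈ s, ∀ x ∈ s, r m x := by
  induction s using Finset.induction_on with
  | empty => intro h; exact absurd h (by simp)
  | @insert a s ha ih =>
    intro _ htot
    rcases s.eq_empty_or_nonempty with rfl | hs
    · have haa : r a a := by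
        rcases htot a (Finset.mem_insert_self a _) a (Finset.mem_insert_self a _) with h | h <;>
          exact h
      refine ⟨a, Finset.mem_insert_self a _, ?_⟩
      intro p hp
      have hp' : p = a := by simpa using hp
      rw [hp']
      exact haa
    · obtain ⟨m, hm, hmin⟩ := ih hs
        (fun p hp q hq => htot p (Finset.mem_insert_of_mem hp) q (Finset.mem_insert_of_mem hq))
      have haa : r a a := by
        rcases htot a (Finset.mem_insert_self a _) a (Finset.mem_insert_self a _) with h | h <;>
          exact h
      rcases htot a (Finset.mem_insert_self a _) m (Finset.mem_insert_of_mem hm) with h | h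
      · refine ⟨a, Finset.mem_insert_self a _, ?_⟩
        intro p hp
        rcases Finset.mem_insert.mp hp with rfl | hp'
        · exact haa
        · exact htr h (hmin p hp')
      · refine ⟨m, Finset.mem_insert_of_mem hm, ?_⟩
        intro p hp
        rcases Finset.mem_insert.mp hp with rfl | hp'
        · exact h
        · exact hmin p hp'

lemma exists_lca [Fintype V] (T : PTree V) (a b : V) : ∃ u, T.isLCA u a b := by
  classical
  obtain ⟨m, hm, hmin⟩ := exists_min_of_total (T.anc) (fun h1 h2 => h1.trans h2)
    (Finset.univ.filter fun w => T.anc a w ∧ T.anc b w)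
    ⟨T.root, Finset.mem_filter.mpr ⟨Finset.mem_univ _, T.connected a, T.connected b⟩⟩
    (by
      intro p hp q hq
      simp only [Finset.mem_filter] at hp hq
      exact anc_total hp.2.1 hq.2.1)
  simp only [Finset.mem_filter, Finset.mem_univ, true_and] at hm
  refine ⟨m, hm.1, hm.2, fun w hw1 hw2 => hmin w ?_⟩
  simp only [Finset.mem_filter, Finset.mem_univ, true_and]
  exact ⟨hw1, hw2⟩

lemma lca_of_children {T : PTree V} {u v₁ v₂ a b : V} (h1 : T.child v₁ u) (h2 : T.child v₂ u)
    (hne : v₁ ≠ v₂) (ha : T.anc a v₁) (hb : T.anc b v₂) : T.isLCA u a b := by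
  have hau : T.anc a u := ha.trans (.single h1)
  have hbu : T.anc b u := hb.trans (.single h2)
  refine ⟨hau, hbu, fun c hac hbc => ?_⟩
  rcases anc_total hau hac with h | h
  · exact h
  · rcases anc_total ha hac with h' | h'
    · rcases anc_between h' h h1 with rfl | rfl
      · rcases anc_total hbc hb with h'' | h''
        · exact absurd h'' (child_not_anc h1 h2 hne)
        · exact absurd h'' (child_not_anc h2 h1 hne.symm)
      · exact .refl
    · rcases anc_total (hbc.trans h') hb with h'' | h''
      · exact absurd h'' (child_not_anc h1 h2 hne)
      · exact absurd h'' (child_not_anc h2 h1 hne.symm)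

lemma lca_not_in_child {T : PTree V} {u v a b : V} (h : T.isLCA u a b) (ha : T.anc a v)
    (hb : T.anc b v) (hv : T.child v u) : False := by
  have huv : T.anc u v := h.2.2 v ha hb
  have heq : u = v := anc_antisymm huv (.single hv)
  subst heq
  exact no_cycle u (.single hv)

end PTree

end Helpers

/-- For an ugly quartet `⟨x y x' z⟩` in a BMG `(𝔾,σ)`
(induced path `x–y–x'–z` in the symmetric part, `σ(x) = σ(x')`, colors
`σ(x), σ(y), σ(z)` pairwise distinct) and every tree `(T,σ)` explaining
`(𝔾,σ)`: `lca(x',y) = lca(x,y)`, and this vertex has two distinct children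
whose subtree color sets intersect; hence both edges `xy` and `x'y` are
unambiguously false-positive. -/
theorem stmt_15 {V L C : Type*} [Fintype V] (T : PTree V) (ι : L → V)
    (σT : V → C) (σ : L → C) (E : L → L → Prop)
    (hexp : Explains T ι σT σ E)
    (x y x' z : L) (hxx' : x ≠ x')
    (hc1 : σ x = σ x') (hc2 : σ x ≠ σ y) (hc3 : σ x ≠ σ z) (hc4 : σ y ≠ σ z)
    (he1 : E x y ∧ E y x) (he2 : E y x' ∧ E x' y) (he3 : E x' z ∧ E z x')
    (hn1 : ¬ (E x z ∧ E z x)) (hn2 : ¬ (E x x' ∧ E x' x))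
    (hn3 : ¬ (E y z ∧ E z y)) :
    ∀ u, T.isLCA u (ι x) (ι y) →
      T.isLCA u (ι x') (ι y) ∧
      ∃ v₁ v₂, v₁ ≠ v₂ ∧ T.child v₁ u ∧ T.child v₂ u ∧
        (T.leafColors σT v₁ ∩ T.leafColors σT v₂).Nonempty := by
  obtain ⟨hinj, hleaf, hsurj, hcol, hE⟩ := hexp
  intro u hu
  have bm_yx : T.bestMatch σT (ι y) (ι x) := (hE y x).mp he1.2
  have bm_yx' : T.bestMatch σT (ι y) (ι x') := (hE y x').mp he2.1
  have bm_x'z : T.bestMatch σT (ι x') (ι z) := (hE x' z).mp he3.1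
  have bm_zx' : T.bestMatch σT (ι z) (ι x') := (hE z x').mp he3.2
  have hcXX' : σT (ι x') = σT (ι x) := by rw [hcol, hcol]; exact hc1.symm
  obtain ⟨u', hu'⟩ := PTree.exists_lca T (ι y) (ι x')
  have h1 : T.anc u u' := bm_yx.2.2.2 (ι x') (hleaf x') hcXX' u u' hu.symm hu'
  have h2 : T.anc u' u := bm_yx'.2.2.2 (ι x) (hleaf x) hcXX'.symm u' u hu' hu.symm
  have huu' : u' = u := (PTree.anc_antisymm h1 h2).symm
  rw [huu'] at hu'
  have hu2 : T.isLCA u (ι x') (ι y) := hu'.symm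
  refine ⟨hu2, ?_⟩
  have hσxy : σT (ι x) ≠ σT (ι y) := by rw [hcol, hcol]; exact hc2
  have hσx'y : σT (ι x') ≠ σT (ι y) := by rw [hcXX']; exact hσxy
  have hXu : ι x ≠ u := by
    intro h
    have h2 := hu.2.1
    rw [← h] at h2
    exact hσxy (congrArg σT (PTree.leaf_anc (hleaf x) h2)).symm
  have hYu : ι y ≠ u := by
    intro h
    have h2 := hu.1
    rw [← h] at h2
    exact hσxy (congrArg σT (PTree.leaf_anc (hleaf y) h2))
  have hX'u : ι x' ≠ u := by
    intro h
    have h2 := hu2.2.1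
    rw [← h] at h2
    exact hσx'y (congrArg σT (PTree.leaf_anc (hleaf x') h2)).symm
  obtain ⟨vx, hxvx, hvxu⟩ := PTree.exists_child_between hu.1 hXu
  obtain ⟨vy, hyvy, hvyu⟩ := PTree.exists_child_between hu.2.1 hYu
  obtain ⟨vx', hx'vx', hvx'u⟩ := PTree.exists_child_between hu2.1 hX'u
  have hvxy : vx ≠ vy := by
    intro h
    subst h
    exact PTree.lca_not_in_child hu hxvx hyvy hvxu
  by_cases hvv : vx' = vx
  · subst hvv
    by_cases hnd : (T.leafColors σT vx' ∩ T.leafColors σT vy).Nonempty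
    · exact ⟨vx', vy, hvxy, hvx'u, hvyu, hnd⟩
    · exfalso
      have hdisj : ∀ c, c ∈ T.leafColors σT vx' → c ∈ T.leafColors σT vy → False :=
        fun c g1 g2 => hnd ⟨c, g1, g2⟩
      obtain ⟨w, hw⟩ := PTree.exists_lca T (ι x') (ι z)
      by_cases huw : T.anc u w
      · -- z is "outside": derive that xz is an edge, contradicting hn1
        apply hn1
        obtain ⟨m, hm⟩ := PTree.exists_lca T (ι x) (ι z)
        have hwm : T.anc w m := bm_zx'.2.2.2 (ι x) (hleaf x) hcXX'.symm w m hw.symm hm.symm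
        have hmw : T.anc m w := hm.2.2 w (hu.1.trans huw) hw.2.1
        have hwXZ : T.isLCA w (ι x) (ι z) := (PTree.anc_antisymm hmw hwm) ▸ hm
        have hσxz : σT (ι x) ≠ σT (ι z) := by rw [hcol, hcol]; exact hc3
        constructor
        · refine (hE x z).mpr ⟨hleaf x, hleaf z, hσxz, ?_⟩
          intro z'' hz'' hcz p q hp hq
          have hpw : p = w := PTree.lca_unique hp hwXZ
          rw [hpw]
          rcases PTree.anc_total hq.1 hwXZ.1 with h | h
          · -- q ⪯ w
            by_cases huq : T.anc u q
            · obtain ⟨m', hm'⟩ := PTree.exists_lca T (ι x') z''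
              have ha1 : T.anc w m' := bm_x'z.2.2.2 z'' hz'' hcz w m' hw hm'
              have ha2 : T.anc m' q := hm'.2.2 q (hu2.1.trans huq) hq.2.1
              exact ha1.trans ha2
            · have hqu : T.anc q u := (PTree.anc_total hq.1 hu.1).resolve_right huq
              have hqvx : T.anc q vx' := by
                rcases PTree.anc_total hq.1 hxvx with h' | h'
                · exact h'
                · rcases PTree.anc_between h' hqu hvx'u with rfl | rfl
                  · exact .refl
                  · exact absurd Relation.ReflTransGen.refl huq
              exfalso
              obtain ⟨m', hm'⟩ := PTree.exists_lca T (ι x') z''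
              have ha1 : T.anc w m' := bm_x'z.2.2.2 z'' hz'' hcz w m' hw hm'
              have ha2 : T.anc m' vx' := hm'.2.2 vx' hx'vx' (hq.2.1.trans hqvx)
              have huvx : T.anc u vx' := (huw.trans ha1).trans ha2
              have heq : u = vx' := PTree.anc_antisymm huvx (.single hvx'u)
              exact PTree.no_cycle vx' (.single (heq ▸ hvx'u))
          · exact h
        · refine (hE z x).mpr ⟨hleaf z, hleaf x, fun h => hσxz h.symm, ?_⟩
          intro x'' hx'' hcx p q hp hq
          have hpw : p = w := PTree.lca_unique hp hwXZ.symm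
          rw [hpw]
          exact bm_zx'.2.2.2 x'' hx'' (hcx.trans hcXX'.symm) w q hw.symm hq
      · -- z lies below vx': derive that yz is an edge, contradicting hn3
        have hwu : T.anc w u := (PTree.anc_total hw.1 hu2.1).resolve_right huw
        have hwvx : T.anc w vx' := by
          rcases PTree.anc_total hw.1 hx'vx' with h' | h'
          · exact h'
          · rcases PTree.anc_between h' hwu hvx'u with rfl | rfl
            · exact .refl
            · exact absurd Relation.ReflTransGen.refl huw
        have hzvx : T.anc (ι z) vx' := hw.2.1.trans hwvx
        have hlca_yz : T.isLCA u (ι y) (ι z) :=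
          PTree.lca_of_children hvyu hvx'u hvxy.symm hyvy hzvx
        apply hn3
        have hσyz : σT (ι y) ≠ σT (ι z) := by rw [hcol, hcol]; exact hc4
        constructor
        · refine (hE y z).mpr ⟨hleaf y, hleaf z, hσyz, ?_⟩
          intro z'' hz'' hcz p q hp hq
          have hpu : p = u := PTree.lca_unique hp hlca_yz
          subst hpu
          rcases PTree.anc_total hq.1 hu.2.1 with h | h
          · rcases PTree.anc_total hq.1 hyvy with h' | h'
            · exact absurd (hdisj (σT (ι z)) ⟨ι z, hleaf z, hzvx, rfl⟩
                ⟨z'', hz'', hq.2.1.trans h', hcz⟩) id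
            · rcases PTree.anc_between h' h hvyu with rfl | rfl
              · exact absurd (hdisj (σT (ι z)) ⟨ι z, hleaf z, hzvx, rfl⟩
                  ⟨z'', hz'', hq.2.1, hcz⟩) id
              · exact .refl
          · exact h
        · refine (hE z y).mpr ⟨hleaf z, hleaf y, fun h => hσyz h.symm, ?_⟩
          intro y'' hy'' hcy p q hp hq
          have hpu : p = u := PTree.lca_unique hp hlca_yz.symm
          subst hpu
          rcases PTree.anc_total hq.1 (hzvx.trans (.single hvx'u)) with h | h
          · rcases PTree.anc_total hq.1 hzvx with h' | h'
            · exact absurd (hdisj (σT (ι y)) ⟨y'', hy'', hq.2.1.trans h', hcy⟩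
                ⟨ι y, hleaf y, hyvy, rfl⟩) id
            · rcases PTree.anc_between h' h hvx'u with rfl | rfl
              · exact absurd (hdisj (σT (ι y)) ⟨y'', hy'', hq.2.1, hcy⟩
                  ⟨ι y, hleaf y, hyvy, rfl⟩) id
              · exact .refl
          · exact h
  · exact ⟨vx, vx', fun h => hvv h.symm, hvxu, hvx'u,
      ⟨σT (ι x), ⟨ι x, hleaf x, hxvx, rfl⟩, ⟨ι x', hleaf x', hx'vx', hcXX'⟩⟩⟩
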